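/- arXiv:1604.07328 — 2 statements merged into one kernel-verified Lean document; each statement's English description precedes it below -/
import Mathlib

section
/- If d = [d_1 ≥ … ≥ d_k] is a partition of N in which all parts are odd, then in the transpose partition ᵗd, consecutive parts differ in parity structure as follows: the multiplicity of each part value of ᵗd other than the largest part is even; the largest part of ᵗd is k and occurs with multiplicity d_k. -/
/-!
For an antitone `d`, the `i`-th part of `ᵗd` equals `m > 0` exactly when
`d m ≤ i < d (m - 1)`, so the value `m` occurs in `ᵗd` with multiplicity
`d (m - 1) - d m`. For `m < k` this is a difference of two odd parts, hence even; for
`m > k` it is `0`; and for `m = k` it is `d (k - 1) - 0`.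
-/

/-- A partition is encoded as a weakly decreasing function `d : ℕ → ℕ` giving its
(0-indexed) parts.  Its transpose has `i`-th part the number of indices `j` with
`d j ≥ i + 1`. -/
noncomputable def ptranspose (d : ℕ → ℕ) : ℕ → ℕ :=
  fun i => Nat.card {j : ℕ | i < d j}

section

variable {d : ℕ → ℕ} {i n m : ℕ}

lemma setOf_lt_eq_Iio (hd : Antitone d) (hn : d n ≤ i) (hlt : ∀ j < n, i < d j) :
    {j | i < d j} = Set.Iio n := by
  ext j
  refine ⟨fun hj => ?_, hlt j⟩
  by_contra! hnj
  exact (hd (not_lt.mp hnj)).trans hn |>.not_gt hj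

lemma ptranspose_eq (hd : Antitone d) (hn : d n ≤ i) (hlt : ∀ j < n, i < d j) :
    ptranspose d i = n := by
  rw [ptranspose, setOf_lt_eq_Iio hd hn hlt, Nat.card_coe_set_eq, Set.ncard_Iio_nat]

lemma exists_le_of_ptranspose_ne_zero (h : ptranspose d i ≠ 0) : ∃ j, d j ≤ i := by
  by_contra! hall
  have huniv : {j | i < d j} = Set.univ := Set.eq_univ_of_forall hall
  apply h
  rw [ptranspose, Nat.card_coe_set_eq, huniv, Set.infinite_univ.ncard]

lemma ptranspose_eq_iff (hd : Antitone d) (hm : 0 < m) :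
    ptranspose d i = m ↔ d m ≤ i ∧ i < d (m - 1) := by
  constructor
  · intro h
    have hex := exists_le_of_ptranspose_ne_zero (h.trans_ne hm.ne')
    have hfind : ptranspose d i = Nat.find hex :=
      ptranspose_eq hd (Nat.find_spec hex) fun j hj => not_le.mp (Nat.find_min hex hj)
    obtain rfl : m = Nat.find hex := h.symm.trans hfind
    exact ⟨Nat.find_spec hex, not_le.mp (Nat.find_min hex (Nat.sub_lt hm one_pos))⟩
  · rintro ⟨hle, hlt⟩
    exact ptranspose_eq hd hle fun j hj => hlt.trans_le (hd (Nat.le_sub_one_of_lt hj))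

lemma card_setOf_ptranspose_eq (hd : Antitone d) (hm : 0 < m) :
    Nat.card {i | ptranspose d i = m} = d (m - 1) - d m := by
  have hset : {i | ptranspose d i = m} = Set.Ico (d m) (d (m - 1)) := by
    ext i
    exact ptranspose_eq_iff hd hm
  rw [hset, Nat.card_coe_set_eq, Set.ncard_Ico_nat]

end

/-- If `d = [d_1 ≥ … ≥ d_k]` is a partition (with exactly `k` nonzero parts) all of
whose parts are odd, then in the transpose partition `ᵗd`: the largest part is `k`
and occurs with multiplicity `d_k`, and every other (positive) part value occurs
with even multiplicity. -/
theorem transpose_of_odd_partition (k : ℕ) (hk : 0 < k) (d : ℕ → ℕ)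
    (hd : Antitone d) (hsupp : ∀ i, 0 < d i ↔ i < k)
    (hodd : ∀ i < k, Odd (d i)) :
    ptranspose d 0 = k ∧
    Nat.card {i : ℕ | ptranspose d i = k} = d (k - 1) ∧
    ∀ m : ℕ, 0 < m → m ≠ k → Even (Nat.card {i : ℕ | ptranspose d i = m}) := by
  have hzero : ∀ j, k ≤ j → d j = 0 := fun j hj =>
    Nat.eq_zero_of_not_pos fun h => hj.not_gt ((hsupp j).mp h)
  refine ⟨?_, ?_, fun m hm hmk => ?_⟩
  · exact (ptranspose_eq_iff hd hk).mpr ⟨(hzero k le_rfl).le, (hsupp _).mpr (by omega)⟩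
  · rw [card_setOf_ptranspose_eq hd hk, hzero k le_rfl, Nat.sub_zero]
  · rw [card_setOf_ptranspose_eq hd hm]
    rcases lt_or_gt_of_ne hmk with hlt | hgt
    · exact Nat.Odd.sub_odd (hodd (m - 1) (by omega)) (hodd m hlt)
    · simp [hzero (m - 1) (by omega), hzero m hgt.le]
end

section
/- Let d be a partition of 2n+1. Then there exists a unique largest partition (in the dominance order) among partitions of 2n+1 that are dominated by d and lie in 𝒫₁(2n+1); this partition is called the B-collapse of d. Moreover, if d already lies in 𝒫₁(2n+1), its B-collapse is d itself. -/
/-- `d` is a partition of `N`, encoded as a weakly decreasing function `ℕ → ℕ`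
whose (0-indexed) parts beyond position `N` vanish and which sums to `N`. -/
def IsPartitionFun (N : ℕ) (d : ℕ → ℕ) : Prop :=
  Antitone d ∧ d N = 0 ∧ ∑ i ∈ Finset.range N, d i = N

/-- Dominance order on partitions of `N`: `Dominated d e` means `d ≤ e`, i.e. all
partial sums of `d` are bounded by those of `e`. -/
def Dominated (d e : ℕ → ℕ) : Prop :=
  ∀ m, ∑ i ∈ Finset.range m, d i ≤ ∑ i ∈ Finset.range m, e i

/-- `d ∈ 𝒫₁(N)`: every even (positive) part of `d` occurs with even multiplicity. -/
noncomputable def MemP1 (d : ℕ → ℕ) : Prop :=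
  ∀ r, Even r → 0 < r → Even (Nat.card {i : ℕ | d i = r})

/-!
If `d ∉ 𝒫₁`, let `r` be its largest even part of odd multiplicity. Moving one box from the last
row `q` of length `r` down to the first row `s` shorter than `r - 1` gives a partition `d' < d`:
only the partial sums `D(m)` with `q < m ≤ s` drop, by one. Every `e ∈ 𝒫₁` below `d` stays below
`d'`, because `E(m) = D(m)` for such an `m` is impossible: it propagates down to `m = k`, the
number of parts of `e` that are `≥ r`, and there the parities of `E(k) + k` and `D(k) + k`, which
are those of the numbers of even parts among the first `k`, differ (even for `e` by the
multiplicity condition, odd for `d` because `r` has odd multiplicity). Iterating terminates, and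
antisymmetry of dominance gives uniqueness.
-/

open Finset

def IsBCollapse (N : ℕ) (d c : ℕ → ℕ) : Prop :=
  IsPartitionFun N c ∧ MemP1 c ∧ Dominated c d ∧
    ∀ e : ℕ → ℕ, IsPartitionFun N e → MemP1 e → Dominated e d → Dominated e c

namespace Dominated

variable {c d e : ℕ → ℕ}

theorem refl (d : ℕ → ℕ) : Dominated d d := fun _ => le_rfl

theorem trans (hcd : Dominated c d) (hde : Dominated d e) : Dominated c e :=
  fun m => (hcd m).trans (hde m)

theorem antisymm (hcd : Dominated c d) (hdc : Dominated d c) : c = d := by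
  funext i
  have h := le_antisymm (hcd (i + 1)) (hdc (i + 1))
  rw [sum_range_succ, sum_range_succ, le_antisymm (hcd i) (hdc i)] at h
  exact Nat.add_left_cancel h

theorem sum_range_eq_of_sum_range_eq {j m : ℕ} (hed : Dominated e d)
    (hm : ∑ i ∈ range m, e i = ∑ i ∈ range m, d i) (hjm : j ≤ m)
    (hle : ∀ i ∈ Ico j m, e i ≤ d i) :
    ∑ i ∈ range j, e i = ∑ i ∈ range j, d i := by
  rw [← sum_range_add_sum_Ico e hjm, ← sum_range_add_sum_Ico d hjm] at hm
  have := hed j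
  have := sum_le_sum hle
  omega

end Dominated

theorem Antitone.exists_forall_lt_iff_le {d : ℕ → ℕ} (hd : Antitone d) {t : ℕ}
    (h : ∃ i, d i < t) : ∃ k, ∀ i, i < k ↔ t ≤ d i := by
  refine ⟨Nat.find h, fun i => ⟨fun hi => not_lt.mp (Nat.find_min h hi), fun hi => ?_⟩⟩
  by_contra hk
  exact (hd (not_lt.mp hk)).trans_lt (Nat.find_spec h) |>.not_ge hi

theorem IsPartitionFun.exists_eq_zero {N : ℕ} {d : ℕ → ℕ} (hd : IsPartitionFun N d)
    (h0 : 2 ≤ d 0) : ∃ i < N, d i = 0 := by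
  obtain ⟨-, hdN, hsum⟩ := hd
  by_contra! hpos
  have hN : 0 < N := Nat.pos_of_ne_zero fun hN => by rw [hN] at hdN; omega
  have := sum_lt_sum (s := range N) (f := fun _ => 1) (fun i hi => Nat.one_le_iff_ne_zero.mpr
    (hpos i (mem_range.mp hi))) ⟨0, mem_range.mpr hN, h0⟩
  simp [hsum] at this

theorem exists_greatest_even_of_not_memP1 {d : ℕ → ℕ} (hd : Antitone d) (hP : ¬ MemP1 d) :
    ∃ r, Even r ∧ 0 < r ∧ ¬ Even (Nat.card {i | d i = r}) ∧
      ∀ v, Even v → r < v → Even (Nat.card {i | d i = v}) := by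
  classical
  set P := fun v => Even v ∧ 0 < v ∧ ¬ Even (Nat.card {i | d i = v})
  have hbound : ∀ v, P v → v ≤ d 0 := by
    rintro v ⟨-, -, hodd⟩
    obtain ⟨i, rfl⟩ : ∃ i, d i = v := by
      by_contra! hv
      simp [hv] at hodd
    exact hd (Nat.zero_le i)
  obtain ⟨r0, hr0⟩ : ∃ r0, P r0 := by simpa [MemP1, P] using hP
  obtain ⟨hr, hr0, hodd⟩ := Nat.findGreatest_spec (hbound r0 hr0) hr0
  refine ⟨Nat.findGreatest P (d 0), hr, hr0, hodd, fun v hv hrv => ?_⟩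
  by_contra hodd
  have hPv : P v := ⟨hv, by omega, hodd⟩
  exact Nat.findGreatest_is_greatest hrv (hbound v hPv) hPv

theorem even_sum_range_add_iff (x : ℕ → ℕ) (k : ℕ) :
    Even (∑ i ∈ range k, x i + k) ↔ Even #{i ∈ range k | Even (x i)} := by
  have : ∑ i ∈ range k, x i + k = ∑ i ∈ range k, (x i + 1) := by simp [sum_add_distrib]
  simp [this, even_sum_iff_even_card_odd, Nat.odd_add_one]

theorem even_card_filter_even {ι : Type*} {s : Finset ι} (f : ι → ℕ)
    (h : ∀ v, Even v → Even #{i ∈ s | f i = v}) : Even #{i ∈ s | Even (f i)} := by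
  classical
  rw [card_eq_sum_card_fiberwise (f := f) (t := {i ∈ s | Even (f i)}.image f)
    fun i hi => mem_image_of_mem f hi]
  refine even_sum _ fun v hv => ?_
  obtain ⟨i, hi, rfl⟩ := mem_image.mp hv
  rw [filter_filter, filter_congr fun j _ => and_iff_right_of_imp fun hj : f j = f i =>
    hj ▸ (mem_filter.mp hi).2]
  exact h (f i) (mem_filter.mp hi).2

theorem even_card_filter_even_range {x : ℕ → ℕ} {k t : ℕ} (hk : ∀ i, i < k ↔ t ≤ x i)
    (hm : ∀ v, Even v → t ≤ v → Even (Nat.card {i | x i = v})) :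
    Even #{i ∈ range k | Even (x i)} := by
  refine even_card_filter_even x fun v hv => ?_
  by_cases htv : t ≤ v
  · have hset : {i | x i = v} = ↑{i ∈ range k | x i = v} := by
      ext i
      simp only [Set.mem_ofPred_eq, coe_filter, mem_range]
      exact ⟨fun h => ⟨(hk i).mpr (h ▸ htv), h⟩, And.right⟩
    simpa only [hset, Nat.card_coe_set_eq, Set.ncard_coe_finset] using hm v hv htv
  · rw [card_eq_zero.mpr (filter_eq_empty_iff.mpr fun i hi hxi => htv ?_)]
    · exact Even.zero
    · exact hxi ▸ (hk i).mp (mem_range.mp hi)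

def moveBox (d : ℕ → ℕ) (q s : ℕ) : ℕ → ℕ := d + Pi.single s 1 - Pi.single q 1

section moveBox

variable {d e : ℕ → ℕ} {q s : ℕ}

theorem antitone_add_single (hd : Antitone d) (hs : ∀ i < s, d s < d i) :
    Antitone (d + Pi.single s 1) := by
  intro a b hab
  have := hd hab
  simp only [Pi.add_apply, Pi.single_apply]
  split_ifs <;> subst_vars <;> first | omega | (have := hs a (by omega); omega)

theorem antitone_tsub_single (hd : Antitone d) (hq : ∀ i, q < i → d i < d q) :
    Antitone (d - Pi.single q 1) := by
  intro a b hab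
  have := hd hab
  simp only [Pi.sub_apply, Pi.single_apply]
  split_ifs <;> subst_vars <;> first | omega | (have := hq b (by omega); omega)

theorem sum_range_moveBox_add (hq : 0 < d q) (m : ℕ) :
    ∑ i ∈ range m, moveBox d q s i + (if q < m then 1 else 0) =
      ∑ i ∈ range m, d i + (if s < m then 1 else 0) := by
  have hbox : moveBox d q s + Pi.single q 1 = d + Pi.single s 1 := by
    refine tsub_add_cancel_of_le fun i => ?_
    simp only [Pi.add_apply, Pi.single_apply]
    split_ifs <;> subst_vars <;> omega
  have := congrArg (fun f => ∑ i ∈ range m, f i) hbox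
  simpa only [Pi.add_apply, sum_add_distrib, sum_pi_single', mem_range] using this

theorem dominated_moveBox (hq : 0 < d q) (hqs : q ≤ s) : Dominated (moveBox d q s) d := by
  intro m
  have := sum_range_moveBox_add (s := s) hq m
  split_ifs at this <;> omega

theorem Dominated.moveBox (hed : Dominated e d) (hq : 0 < d q)
    (hlt : ∀ m, q < m → m ≤ s → ∑ i ∈ range m, e i < ∑ i ∈ range m, d i) :
    Dominated e (moveBox d q s) := by
  intro m
  have := sum_range_moveBox_add (s := s) hq m
  have := hed m
  by_cases hm : q < m ∧ m ≤ s
  · have := hlt m hm.1 hm.2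
    split_ifs at * <;> omega
  · split_ifs at * <;> omega

theorem IsPartitionFun.moveBox {N : ℕ} (hd : IsPartitionFun N d) (hqs : q < s) (hsN : s < N)
    (hq : ∀ i, q < i → d i < d q) (hsq : d s + 1 < d q) (hs : ∀ i < s, d s < d i) :
    IsPartitionFun N (moveBox d q s) := by
  obtain ⟨hanti, hdN, hsum⟩ := hd
  refine ⟨antitone_tsub_single (antitone_add_single hanti hs) fun i hi => ?_, ?_, ?_⟩
  · simp only [Pi.add_apply, Pi.single_apply]
    have := hq i hi
    split_ifs <;> subst_vars <;> omega
  · simp [_root_.moveBox, hdN, hsN.ne', (hqs.trans hsN).ne']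
  · have := sum_range_moveBox_add (s := s) (by omega : 0 < d q) N
    rw [if_pos (by omega), if_pos hsN] at this
    omega

end moveBox

/-- If the partial sums agreed at `m`, they would also agree at the number `k` of parts of `e`
that are `≥ r`. For `k < Q` this forces `e k = d k ≥ r`. For `Q ≤ k` it contradicts parity:
among the first `k` parts, `e` has an even number of even ones, `d` an odd number. -/
theorem Dominated.sum_range_lt_of_memP1 {d e : ℕ → ℕ} {r p Q s m : ℕ} (hed : Dominated e d)
    (he : Antitone e) (heP1 : MemP1 e) (hr : Even r) (hr0 : 0 < r)
    (hp : ∀ i, i < p ↔ r + 1 ≤ d i) (hQ : ∀ i, i < Q ↔ r ≤ d i) (hs : ∀ i, i < s ↔ r - 1 ≤ d i)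
    (hmax : ∀ v, Even v → r < v → Even (Nat.card {i | d i = v})) (hodd : Odd (Q - p))
    (hQm : Q ≤ m) (hms : m ≤ s) :
    ∑ i ∈ range m, e i < ∑ i ∈ range m, d i := by
  by_contra hge
  have heq := le_antisymm (hed m) (not_lt.mp hge)
  have hem : e m < r := by
    have h := hed (m + 1)
    rw [sum_range_succ, sum_range_succ, heq] at h
    have := hQ m
    omega
  obtain ⟨k, hk⟩ := he.exists_forall_lt_iff_le ⟨m, hem⟩
  have hek : ∀ i, k ≤ i → e i < r := fun i hki => by have := hk i; omega
  have hkm : k ≤ m := by have := hk m; omega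
  have hle : ∀ i ∈ Ico k m, e i ≤ d i := fun i hi => by
    have := mem_Ico.mp hi
    have := hek i this.1
    have := hs i
    omega
  have hEk := hed.sum_range_eq_of_sum_range_eq heq hkm hle
  rcases lt_or_ge k Q with hkQ | hQk
  · have hEk1 := hed.sum_range_eq_of_sum_range_eq heq (by omega : k + 1 ≤ m)
      fun i hi => hle i (by simp only [mem_Ico] at hi ⊢; omega)
    rw [sum_range_succ, sum_range_succ, hEk] at hEk1
    have := hek k le_rfl
    have := hQ k
    omega
  · have hpQ : p < Q := Nat.lt_of_sub_pos hodd.pos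
    have hr1 : ¬ Even (r - 1) := by
      rintro ⟨a, ha⟩
      obtain ⟨b, hb⟩ := hr
      omega
    have hblock_r : ∑ i ∈ Ico p Q, (if Even (d i) then 1 else 0) = Q - p := by
      rw [sum_congr rfl fun i hi => if_pos ?_, sum_const, Nat.card_Ico, smul_eq_mul, mul_one]
      have := mem_Ico.mp hi
      have := hp i
      have := hQ i
      rwa [show d i = r by omega]
    have hblock_r1 : ∑ i ∈ Ico Q k, (if Even (d i) then 1 else 0) = 0 := by
      refine sum_eq_zero fun i hi => if_neg ?_
      have := mem_Ico.mp hi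
      have := hQ i
      have := hs i
      rwa [show d i = r - 1 by omega]
    have hsplit : #{i ∈ range k | Even (d i)} = #{i ∈ range p | Even (d i)} + (Q - p) := by
      rw [card_filter, card_filter, ← sum_range_add_sum_Ico _ (hpQ.le.trans hQk),
        ← sum_Ico_consecutive _ hpQ.le hQk, hblock_r, hblock_r1, add_zero]
    have hEe := even_card_filter_even_range hk fun v hv hrv => heP1 v hv (by omega)
    have hEd := even_card_filter_even_range hp fun v hv hrv => hmax v hv (by omega)
    rw [← even_sum_range_add_iff, hEk, even_sum_range_add_iff, hsplit] at hEe
    exact Nat.not_even_iff_odd.mpr (hEd.add_odd hodd) hEe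

theorem exists_collapse_step {N : ℕ} {d : ℕ → ℕ} (hd : IsPartitionFun N d) (hP : ¬ MemP1 d) :
    ∃ d', IsPartitionFun N d' ∧ Dominated d' d ∧
      (∃ m ≤ N, ∑ i ∈ range m, d' i < ∑ i ∈ range m, d i) ∧
      ∀ e, IsPartitionFun N e → MemP1 e → Dominated e d → Dominated e d' := by
  -- `r` fills the rows `[p, Q)` of `d` and `r - 1` the rows `[Q, s)`; the step moves a box from
  -- the last row of length `r` to row `s`, the first one shorter than `r - 1`.
  obtain ⟨r, hr, hr0, hodd, hmax⟩ := exists_greatest_even_of_not_memP1 hd.1 hP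
  have hr2 : 2 ≤ r := by obtain ⟨a, ha⟩ := hr; omega
  have hlt : ∀ t, 0 < t → ∃ i, d i < t := fun t ht => ⟨N, hd.2.1 ▸ ht⟩
  obtain ⟨p, hp⟩ := hd.1.exists_forall_lt_iff_le (hlt (r + 1) (by omega))
  obtain ⟨Q, hQ⟩ := hd.1.exists_forall_lt_iff_le (hlt r hr0)
  obtain ⟨s, hs⟩ := hd.1.exists_forall_lt_iff_le (hlt (r - 1) (by omega))
  have hmult : {i | d i = r} = Set.Ico p Q := by
    ext i
    have := hp i
    have := hQ i
    simp only [Set.mem_ofPred_eq, Set.mem_Ico]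
    omega
  rw [hmult, Nat.card_eq_fintype_card, Fintype.card_ofFinset, Nat.card_Ico,
    Nat.not_even_iff_odd] at hodd
  have hpQ : p < Q := Nat.lt_of_sub_pos hodd.pos
  have hdr : ∀ i, p ≤ i → i < Q → d i = r := fun i hpi hiQ => by
    have := hp i
    have := hQ i
    omega
  have hQs : Q ≤ s := by
    by_contra! hsQ
    have := hQ s
    have := hs s
    omega
  obtain ⟨z, hzN, hz⟩ := hd.exists_eq_zero (by have := hQ 0; omega)
  have hsN : s < N := by
    have := hs z
    omega
  have hdq : 0 < d (Q - 1) := hdr (Q - 1) (by omega) (by omega) ▸ hr0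
  refine ⟨moveBox d (Q - 1) s, ?_, dominated_moveBox hdq (by omega), ⟨Q, by omega, ?_⟩,
    fun e he heP1 hed => hed.moveBox hdq fun m hm hms =>
      hed.sum_range_lt_of_memP1 he.1 heP1 hr hr0 hp hQ hs hmax hodd (by omega) hms⟩
  · have hdQ : d (Q - 1) = r := hdr (Q - 1) (by omega) (by omega)
    refine hd.moveBox (by omega) hsN (fun i hi => ?_) ?_ fun i hi => ?_
    · have := hQ i
      omega
    · have := hs s
      omega
    · have := hs s
      have := hs i
      omega
  · have := sum_range_moveBox_add (s := s) hdq Q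
    rw [if_pos (by omega), if_neg (by omega)] at this
    omega

theorem exists_isBCollapse {N : ℕ} {d : ℕ → ℕ} (hd : IsPartitionFun N d) :
    ∃ c, IsBCollapse N d c := by
  by_cases hP : MemP1 d
  · exact ⟨d, hd, hP, .refl d, fun _ _ _ hed => hed⟩
  · obtain ⟨d', hd', hd'd, hlt, hmax⟩ := exists_collapse_step hd hP
    obtain ⟨c, hc, hcP1, hcd', hcmax⟩ := exists_isBCollapse hd'
    exact ⟨c, hc, hcP1, hcd'.trans hd'd,
      fun e he heP1 hed => hcmax e he heP1 (hmax e he heP1 hed)⟩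
termination_by ∑ m ∈ range (N + 1), ∑ i ∈ range m, d i
decreasing_by
  obtain ⟨m, hmN, hm⟩ := hlt
  exact sum_lt_sum (fun j _ => hd'd j) ⟨m, mem_range.mpr (Nat.lt_succ_of_le hmN), hm⟩

theorem IsBCollapse.unique {N : ℕ} {d c c' : ℕ → ℕ} (hc : IsBCollapse N d c)
    (hc' : IsBCollapse N d c') : c' = c :=
  (hc.2.2.2 c' hc'.1 hc'.2.1 hc'.2.2.1).antisymm (hc'.2.2.2 c hc.1 hc.2.1 hc.2.2.1)

theorem IsBCollapse.eq_of_memP1 {N : ℕ} {d c : ℕ → ℕ} (hd : IsPartitionFun N d) (hdP1 : MemP1 d)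
    (hc : IsBCollapse N d c) : c = d :=
  hc.2.2.1.antisymm (hc.2.2.2 d hd hdP1 (.refl d))

/-- For any partition `d` of `2n+1` there exists a unique largest partition (in the
dominance order) among partitions of `2n+1` dominated by `d` and lying in
`𝒫₁(2n+1)` — the B-collapse of `d`.  Moreover, if `d` already lies in `𝒫₁(2n+1)`,
its B-collapse is `d` itself. -/
theorem bCollapse_existsUnique (n : ℕ) (d : ℕ → ℕ)
    (hd : IsPartitionFun (2 * n + 1) d) :
    (∃! c : ℕ → ℕ, IsPartitionFun (2 * n + 1) c ∧ MemP1 c ∧ Dominated c d ∧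
        ∀ e : ℕ → ℕ, IsPartitionFun (2 * n + 1) e → MemP1 e → Dominated e d →
          Dominated e c) ∧
    (MemP1 d → ∀ c : ℕ → ℕ,
        (IsPartitionFun (2 * n + 1) c ∧ MemP1 c ∧ Dominated c d ∧
          ∀ e : ℕ → ℕ, IsPartitionFun (2 * n + 1) e → MemP1 e → Dominated e d →
            Dominated e c) → c = d) := by
  obtain ⟨c, hc⟩ := exists_isBCollapse hd
  exact ⟨⟨c, hc, fun c' hc' => hc.unique hc'⟩,
    fun hdP1 c' hc' => IsBCollapse.eq_of_memP1 hd hdP1 hc'⟩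
end
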